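/- For every real α, Σ_{k=0}^∞ (-1)^k ((2k-1)!!/(k!(k+1)!)) (α²/2)^k = e^{-α²/2} (I₀(α²/2) + I₁(α²/2)). -/

import Mathlib

open Real Filter

/-- Modified Bessel function of the first kind (integer order), via its power series. -/
noncomputable def besselI (ν : ℕ) (x : ℝ) : ℝ :=
  ∑' k : ℕ, (x/2)^(2*k+ν) / ((Nat.factorial k : ℝ) * (Nat.factorial (k+ν) : ℝ))

/-- The odd double factorial (2k-1)!! = (2k)!/(2^k k!), with (-1)!! = 1. -/
noncomputable def oddDF (k : ℕ) : ℝ := (Nat.factorial (2*k) : ℝ) / (2^k * (Nat.factorial k : ℝ))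

namespace D0Aux

/-- `C(m, ⌊m/2⌋)`. -/
def bb (m : ℕ) : ℕ := m.choose (m / 2)

noncomputable def eps (m : ℕ) : ℕ := if m % 2 = 0 then catalan (m / 2) else 0

lemma cat_rec (k : ℕ) : (k + 2) * catalan (k + 1) = (4 * k + 2) * catalan k := by
  have h1 := succ_mul_catalan_eq_centralBinom (k + 1)
  have h2 := Nat.succ_mul_centralBinom_succ k
  have h3 := succ_mul_catalan_eq_centralBinom k
  have key : (k + 1) * ((k + 2) * catalan (k + 1)) = (k + 1) * ((4 * k + 2) * catalan k) := by
    calc (k + 1) * ((k + 2) * catalan (k + 1)) = (k + 1) * ((k + 1 + 1) * catalan (k + 1)) := by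
          ring
      _ = (k + 1) * Nat.centralBinom (k + 1) := by rw [h1]
      _ = 2 * (2 * k + 1) * Nat.centralBinom k := h2
      _ = 2 * (2 * k + 1) * ((k + 1) * catalan k) := by rw [h3]
      _ = (k + 1) * ((4 * k + 2) * catalan k) := by ring
  exact Nat.eq_of_mul_eq_mul_left (by omega) key

lemma choose_symm_2k1 (k : ℕ) : (2 * k + 1).choose (k + 1) = (2 * k + 1).choose k := by
  have := Nat.choose_symm (show k + 1 ≤ 2 * k + 1 by omega)
  rw [show 2 * k + 1 - (k + 1) = k by omega] at this
  exact this.symm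

lemma key1 (k : ℕ) : (k + 1) * (2 * k + 1).choose k = (2 * k + 1) * (2 * k).choose k := by
  have h := Nat.add_one_mul_choose_eq (2 * k) k
  -- succ (2k) * choose (2k) k = choose (2k+1) (k+1) * (k+1)
  rw [choose_symm_2k1 k] at h
  exact (Nat.mul_comm _ _).trans h.symm

lemma bb_succ (m : ℕ) : bb (m + 1) + eps m = 2 * bb m := by
  obtain ⟨k, rfl | rfl⟩ := Nat.even_or_odd' m
  · -- m = 2k
    have e1 : (2 * k + 1) / 2 = k := by omega
    have e2 : (2 * k) / 2 = k := by omega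
    have e3 : (2 * k) % 2 = 0 := by omega
    simp only [bb, eps, e1, e2, e3, if_pos rfl]
    have hc : (k + 1) * catalan k = (2 * k).choose k := by
      have := succ_mul_catalan_eq_centralBinom k
      rwa [Nat.centralBinom] at this
    have := key1 k
    have goal : (k + 1) * ((2 * k + 1).choose k + catalan k) = (k + 1) * (2 * ((2 * k).choose k)) := by
      rw [Nat.mul_add, hc, this]; ring
    exact Nat.eq_of_mul_eq_mul_left (by omega) goal
  · -- m = 2k+1
    have e1 : (2 * k + 1 + 1) / 2 = k + 1 := by omega
    have e2 : (2 * k + 1) / 2 = k := by omega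
    have e3 : (2 * k + 1) % 2 = 1 := by omega
    simp only [bb, eps, e1, e2, e3]
    rw [if_neg (by omega)]
    have : (2 * k + 1 + 1).choose (k + 1) = (2 * k + 1).choose k + (2 * k + 1).choose (k + 1) :=
      Nat.choose_succ_succ' (2 * k + 1) k ▸ rfl
    rw [Nat.add_zero]
    rw [show (2 * k + 1 + 1) = (2 * k + 1) + 1 from rfl, Nat.choose_succ_succ, choose_symm_2k1]
    omega

lemma cert (n k : ℕ) :
    (n + 1) * (n + 3) * ((n + 1).choose (2 * k)) + (k + 1) * (4 * k + 2) * ((n + 1).choose (2 * k + 2))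
      = (n + 1) * (2 * n + 3) * (n.choose (2 * k)) + 4 * k * (k + 1) * ((n + 1).choose (2 * k)) := by
  rcases le_or_gt (2 * k + 1) n with h | h
  · -- main case: n = 2k+1+d
    obtain ⟨d, rfl⟩ : ∃ d, n = 2 * k + 1 + d := ⟨n - (2 * k + 1), by omega⟩
    have key : ((2 * k + 1 + d + 1) * (2 * k + 1 + d + 3) * ((2 * k + 1 + d + 1).choose (2 * k))
        + (k + 1) * (4 * k + 2) * ((2 * k + 1 + d + 1).choose (2 * k + 2)) : ℝ)
      = (2 * k + 1 + d + 1) * (2 * (2 * k + 1 + d) + 3) * ((2 * k + 1 + d).choose (2 * k))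
        + 4 * k * (k + 1) * ((2 * k + 1 + d + 1).choose (2 * k)) := by
      rw [Nat.cast_choose ℝ (show 2 * k ≤ 2 * k + 1 + d + 1 by omega),
          Nat.cast_choose ℝ (show 2 * k + 2 ≤ 2 * k + 1 + d + 1 by omega),
          Nat.cast_choose ℝ (show 2 * k ≤ 2 * k + 1 + d by omega),
          show 2 * k + 1 + d + 1 - 2 * k = d + 2 by omega,
          show 2 * k + 1 + d + 1 - (2 * k + 2) = d by omega,
          show 2 * k + 1 + d - 2 * k = d + 1 by omega,
          show 2 * k + 1 + d + 1 = (2 * k + 1 + d) + 1 from rfl]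
      rw [Nat.factorial_succ (2 * k + 1 + d),
          show d + 2 = (d + 1) + 1 from rfl, Nat.factorial_succ (d + 1), Nat.factorial_succ d,
          show 2 * k + 2 = (2 * k + 1) + 1 from rfl, Nat.factorial_succ (2 * k + 1),
          Nat.factorial_succ (2 * k)]
      have h1 : ((2 * k + 1 + d).factorial : ℝ) ≠ 0 := Nat.cast_ne_zero.2 (Nat.factorial_ne_zero _)
      have h2 : ((2 * k).factorial : ℝ) ≠ 0 := Nat.cast_ne_zero.2 (Nat.factorial_ne_zero _)
      have h3 : (d.factorial : ℝ) ≠ 0 := Nat.cast_ne_zero.2 (Nat.factorial_ne_zero _)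
      field_simp
      push_cast
      ring
    exact_mod_cast key
  rcases eq_or_lt_of_le (show n ≤ 2 * k by omega) with h2 | h2
  · -- n = 2k
    subst h2
    have c1 : (2 * k + 1).choose (2 * k) = 2 * k + 1 := by
      have := Nat.choose_symm (show 2 * k ≤ 2 * k + 1 by omega)
      rw [show 2 * k + 1 - 2 * k = 1 by omega, Nat.choose_one_right] at this
      exact this.symm
    rw [c1, Nat.choose_self, Nat.choose_eq_zero_of_lt (by omega)]
    ring
  rcases eq_or_lt_of_le (show n + 1 ≤ 2 * k by omega) with h3 | h3
  · -- n + 1 = 2k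
    rw [← h3, Nat.choose_self, Nat.choose_eq_zero_of_lt (by omega),
        Nat.choose_eq_zero_of_lt (by omega)]
    simp only [mul_zero, zero_add, add_zero, mul_one]
    rw [show n + 3 = 2 * k + 2 by omega, h3]
    ring
  · -- 2k > n+1
    rw [Nat.choose_eq_zero_of_lt (by omega), Nat.choose_eq_zero_of_lt (by omega),
        Nat.choose_eq_zero_of_lt (by omega)]
    simp

noncomputable def tt (n k : ℕ) : ℝ := (n.choose (2 * k) : ℝ) * (catalan k : ℝ) * 2 ^ n / 4 ^ k

noncomputable def ff (n k : ℕ) : ℝ := 4 * k * (k + 1) * tt n k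

noncomputable def TT (n : ℕ) : ℝ := ∑ k ∈ Finset.range (n + 1), tt n k

lemma tt_zero {n k : ℕ} (h : n < 2 * k) : tt n k = 0 := by
  simp [tt, Nat.choose_eq_zero_of_lt h]

lemma certR (n k : ℕ) :
    ((n : ℝ) + 1) * (n + 3) * tt (n + 1) k
      = ((n : ℝ) + 1) * (4 * n + 6) * tt n k + (ff (n + 1) k - ff (n + 1) (k + 1)) := by
  have hc : (((n + 1) * (n + 3) * ((n + 1).choose (2 * k))
      + (k + 1) * (4 * k + 2) * ((n + 1).choose (2 * k + 2)) : ℕ) : ℝ)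
      = ((n + 1) * (2 * n + 3) * (n.choose (2 * k)) + 4 * k * (k + 1) * ((n + 1).choose (2 * k)) : ℕ) := by
    exact_mod_cast congrArg (Nat.cast : ℕ → ℝ) (cert n k)
  have hr : (((k + 2) * catalan (k + 1) : ℕ) : ℝ) = ((4 * k + 2) * catalan k : ℕ) := by
    exact_mod_cast congrArg (Nat.cast : ℕ → ℝ) (cat_rec k)
  push_cast at hc hr
  unfold ff tt
  simp only [show 2 * (k + 1) = 2 * k + 2 from by ring]
  push_cast
  have h4 : ((4 : ℝ) ^ k) ≠ 0 := by positivity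
  linear_combination (2 * (2:ℝ) ^ n / 4 ^ k * (catalan k : ℝ)) * hc
    + (2 * (2:ℝ) ^ n / 4 ^ k * ((k : ℝ) + 1) * (((n + 1).choose (2 * k + 2) : ℕ) : ℝ)) * hr

lemma touchard (n : ℕ) : TT n = catalan (n + 1) := by
  induction n with
  | zero => simp [TT, tt]
  | succ n ih =>
    have hsum : ((n : ℝ) + 1) * (n + 3) * TT (n + 1)
        = ((n : ℝ) + 1) * (4 * n + 6) * (∑ k ∈ Finset.range (n + 2), tt n k)
          + (ff (n + 1) 0 - ff (n + 1) (n + 2)) := by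
      rw [TT, Finset.mul_sum, Finset.mul_sum, ← Finset.sum_range_sub' (ff (n + 1)) (n + 2),
        ← Finset.sum_add_distrib]
      exact Finset.sum_congr rfl fun k _ => certR n k
    have hf0 : ff (n + 1) 0 = 0 := by simp [ff]
    have hfN : ff (n + 1) (n + 2) = 0 := by
      rw [ff, tt_zero (by omega)]; ring
    have hTn : (∑ k ∈ Finset.range (n + 2), tt n k) = TT n := by
      rw [Finset.sum_range_succ, tt_zero (show n < 2 * (n + 1) by omega), add_zero]; rfl
    rw [hf0, hfN, hTn, ih] at hsum
    have hr : ((n : ℝ) + 3) * (catalan (n + 2) : ℝ) = (4 * n + 6) * (catalan (n + 1) : ℝ) := by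
      have := cat_rec (n + 1)
      have h2 : (((n + 1 + 2) * catalan (n + 1 + 1) : ℕ) : ℝ) = ((4 * (n + 1) + 2) * catalan (n + 1) : ℕ) := by
        exact_mod_cast congrArg (Nat.cast : ℕ → ℝ) this
      push_cast at h2
      convert h2 using 2 <;> push_cast <;> ring
    have hcancel : ((n : ℝ) + 1) * (n + 3) * TT (n + 1) = ((n : ℝ) + 1) * (n + 3) * (catalan (n + 2) : ℝ) := by
      rw [hsum]
      linear_combination (-((n : ℝ) + 1)) * hr
    have hne : ((n : ℝ) + 1) * (n + 3) ≠ 0 := by positivity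
    exact_mod_cast mul_left_cancel₀ hne hcancel

noncomputable def uu (n m : ℕ) : ℝ :=
  (-1) ^ m * (n.choose m : ℝ) * (bb m : ℝ) * 2 ^ n / 2 ^ m

noncomputable def SSum (n : ℕ) : ℝ := ∑ m ∈ Finset.range (n + 1), uu n m

noncomputable def ee (n j : ℕ) : ℝ := (-1) ^ j * (n.choose j : ℝ) * (eps j : ℝ) * 2 ^ n / 2 ^ j

lemma sum_range_even_odd (f : ℕ → ℝ) (N : ℕ) :
    ∑ j ∈ Finset.range (2 * N), f j
      = ∑ k ∈ Finset.range N, f (2 * k) + ∑ k ∈ Finset.range N, f (2 * k + 1) := by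
  induction N with
  | zero => simp
  | succ N ih =>
    rw [show 2 * (N + 1) = (2 * N + 1) + 1 by ring, Finset.sum_range_succ, Finset.sum_range_succ,
      Finset.sum_range_succ, Finset.sum_range_succ, ih]
    ring

lemma E_eq (n : ℕ) : ∑ j ∈ Finset.range (n + 1), ee n j = TT n := by
  have hext : ∑ j ∈ Finset.range (n + 1), ee n j = ∑ j ∈ Finset.range (2 * (n + 1)), ee n j := by
    apply Finset.sum_subset
    · intro x hx
      simp only [Finset.mem_range] at hx ⊢
      omega
    · intro x _ hx
      simp only [Finset.mem_range, not_lt] at hx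
      simp [ee, Nat.choose_eq_zero_of_lt (show n < x by omega)]
  rw [hext, sum_range_even_odd]
  have hodd : ∑ k ∈ Finset.range (n + 1), ee n (2 * k + 1) = 0 := by
    apply Finset.sum_eq_zero
    intro k _
    have hm : (2 * k + 1) % 2 = 1 := by omega
    simp [ee, eps, hm]
  have heven : ∀ k, ee n (2 * k) = tt n k := by
    intro k
    rw [ee, tt, eps]
    rw [if_pos (by omega), show 2 * k / 2 = k by omega]
    rw [pow_mul, pow_mul]
    norm_num
  rw [hodd, add_zero]
  exact Finset.sum_congr rfl fun k _ => heven k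

lemma SS_eq (n : ℕ) : SSum n = catalan n := by
  induction n with
  | zero => simp [SSum, uu, bb]
  | succ n ih =>
    have hbbR : ∀ j : ℕ, (bb (j + 1) : ℝ) = 2 * (bb j : ℝ) - (eps j : ℝ) := by
      intro j
      have := bb_succ j
      have h2 : ((bb (j + 1) + eps j : ℕ) : ℝ) = ((2 * bb j : ℕ) : ℝ) := by rw [this]
      push_cast at h2
      linarith
    have step : ∀ j ∈ Finset.range (n + 1),
        uu (n + 1) (j + 1) = 2 * (uu n (j + 1) - uu n j) + ee n j := by
      intro j _
      rw [uu, uu, uu, ee, Nat.choose_succ_succ, hbbR j]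
      push_cast
      ring
    rw [SSum, Finset.sum_range_succ' _ (n + 1), Finset.sum_congr rfl step]
    rw [Finset.sum_add_distrib, ← Finset.mul_sum, Finset.sum_range_sub (uu n) (n + 1)]
    have h1 : uu n (n + 1) = 0 := by simp [uu, Nat.choose_succ_self]
    have h2 : uu n 0 = 2 ^ n := by simp [uu, bb]
    have h3 : uu (n + 1) 0 = 2 ^ (n + 1) := by simp [uu, bb]
    rw [h1, h2, h3, E_eq, touchard]
    push_cast
    ring

lemma bb_le (m : ℕ) : bb m ≤ 2 ^ m := by
  calc bb m ≤ ∑ i ∈ Finset.range (m + 1), m.choose i :=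
        Finset.single_le_sum (f := fun i => m.choose i) (fun i _ => Nat.zero_le _)
          (Finset.mem_range.2 (show m / 2 < m + 1 by omega))
    _ = 2 ^ m := Nat.sum_range_choose m

variable (y : ℝ)

noncomputable def gg (m : ℕ) : ℝ := (bb m : ℝ) * y ^ m / (2 ^ m * (Nat.factorial m : ℝ))

lemma gg_norm_summable : Summable fun m => ‖gg y m‖ := by
  apply Summable.of_nonneg_of_le (fun m => norm_nonneg _) _ (Real.summable_pow_div_factorial |y|)
  intro m
  rw [gg, Real.norm_eq_abs, abs_div, abs_mul, abs_pow]
  rw [abs_of_nonneg (by positivity : (0:ℝ) ≤ (2:ℝ)^m * (Nat.factorial m : ℝ))]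
  rw [abs_of_nonneg (by positivity : (0:ℝ) ≤ ((bb m : ℕ) : ℝ))]
  rw [div_le_div_iff₀ (by positivity) (by positivity)]
  have hb : ((bb m : ℕ) : ℝ) ≤ 2 ^ m := by exact_mod_cast bb_le m
  calc ((bb m : ℕ) : ℝ) * |y| ^ m * (Nat.factorial m : ℝ)
      ≤ 2 ^ m * |y| ^ m * (Nat.factorial m : ℝ) := by
        apply mul_le_mul_of_nonneg_right (mul_le_mul_of_nonneg_right hb (by positivity)) (by positivity)
    _ = |y| ^ m * (2 ^ m * (Nat.factorial m : ℝ)) := by ring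

lemma gg_summable : Summable (gg y) := (gg_norm_summable y).of_norm

lemma gg_even (k : ℕ) : gg y (2 * k) = (y/2)^(2*k+0) / ((Nat.factorial k : ℝ) * (Nat.factorial (k+0) : ℝ)) := by
  have h := Nat.choose_mul_factorial_mul_factorial (show k ≤ 2 * k by omega)
  rw [show 2 * k - k = k by omega] at h
  have hR : (((2 * k).choose k : ℕ) : ℝ) * (Nat.factorial k : ℝ) * (Nat.factorial k : ℝ)
      = ((2 * k).factorial : ℝ) := by exact_mod_cast h
  rw [gg, bb, show 2 * k / 2 = k by omega, div_pow, div_div]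
  simp only [Nat.add_zero]
  rw [div_eq_div_iff (by positivity) (by positivity)]
  linear_combination (y ^ (2 * k) * (2:ℝ) ^ (2 * k)) * hR

lemma gg_odd (k : ℕ) : gg y (2 * k + 1) = (y/2)^(2*k+1) / ((Nat.factorial k : ℝ) * (Nat.factorial (k+1) : ℝ)) := by
  have h := Nat.choose_mul_factorial_mul_factorial (show k ≤ 2 * k + 1 by omega)
  rw [show 2 * k + 1 - k = k + 1 by omega] at h
  have hR : (((2 * k + 1).choose k : ℕ) : ℝ) * (Nat.factorial k : ℝ) * (Nat.factorial (k+1) : ℝ)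
      = ((2 * k + 1).factorial : ℝ) := by exact_mod_cast h
  rw [gg, bb, show (2 * k + 1) / 2 = k by omega, div_pow, div_div]
  rw [div_eq_div_iff (by positivity) (by positivity)]
  linear_combination (y ^ (2 * k + 1) * (2:ℝ) ^ (2 * k + 1)) * hR

lemma bessel_sum : besselI 0 y + besselI 1 y = ∑' m, gg y m := by
  have hge : Summable fun k => gg y (2 * k) :=
    (gg_summable y).comp_injective (fun a b h => by omega)
  have hgo : Summable fun k => gg y (2 * k + 1) :=
    (gg_summable y).comp_injective (fun a b h => by omega)
  rw [← tsum_even_add_odd hge hgo, besselI, besselI]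
  congr 1
  · exact (tsum_congr fun k => (gg_even y k)).symm
  · exact (tsum_congr fun k => (gg_odd y k)).symm

lemma exp_norm_summable (y : ℝ) : Summable fun j => ‖(-y) ^ j / (Nat.factorial j : ℝ)‖ := by
  have h : ∀ j : ℕ, ‖(-y) ^ j / (Nat.factorial j : ℝ)‖ = |y| ^ j / (Nat.factorial j : ℝ) := by
    intro j
    rw [Real.norm_eq_abs, abs_div, abs_pow, abs_neg,
      abs_of_nonneg (by positivity : (0:ℝ) ≤ (Nat.factorial j : ℝ))]
  rw [summable_congr h]
  exact Real.summable_pow_div_factorial |y|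

lemma exp_eq (y : ℝ) : Real.exp (-y) = ∑' j, (-y) ^ j / (Nat.factorial j : ℝ) := by
  rw [Real.exp_eq_exp_ℝ, NormedSpace.exp_eq_tsum_div]

lemma cat_fact (n : ℕ) : (catalan n : ℝ) * ((Nat.factorial n : ℝ) * (Nat.factorial (n+1) : ℝ))
    = ((2 * n).factorial : ℝ) := by
  have h1 := succ_mul_catalan_eq_centralBinom n
  have h2 := Nat.choose_mul_factorial_mul_factorial (show n ≤ 2 * n by omega)
  rw [show 2 * n - n = n by omega] at h2
  have h1' : (n + 1) * catalan n = (2 * n).choose n := by rw [h1]; rfl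
  have key : (n + 1) * catalan n * (Nat.factorial n * Nat.factorial n) = (2 * n).factorial := by
    rw [h1', ← Nat.mul_assoc]
    exact h2
  have hc : (((n + 1) * catalan n * (Nat.factorial n * Nat.factorial n) : ℕ) : ℝ)
      = ((2 * n).factorial : ℝ) := by exact_mod_cast key
  push_cast at hc
  rw [Nat.factorial_succ]
  push_cast
  linear_combination hc

lemma coeff_eq (y : ℝ) (n : ℕ) :
    ∑ m ∈ Finset.range (n + 1), ((-y) ^ m / (Nat.factorial m : ℝ)) * gg y (n - m)
      = (-1 : ℝ) ^ n * (oddDF n / ((Nat.factorial n : ℝ) * (Nat.factorial (n+1) : ℝ))) * y ^ n := by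
  rw [← Finset.sum_range_reflect]
  have hterm : ∀ m ∈ Finset.range (n + 1),
      ((-y) ^ (n + 1 - 1 - m) / (Nat.factorial (n + 1 - 1 - m) : ℝ)) * gg y (n - (n + 1 - 1 - m))
        = uu n m * ((-1) ^ n * y ^ n / (2 ^ n * (Nat.factorial n : ℝ))) := by
    intro m hm
    rw [Finset.mem_range] at hm
    obtain ⟨d, rfl⟩ : ∃ d, n = m + d := ⟨n - m, by omega⟩
    rw [show m + d + 1 - 1 - m = d by omega, show m + d - d = m by omega]
    have h := Nat.choose_mul_factorial_mul_factorial (show m ≤ m + d by omega)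
    rw [show m + d - m = d by omega] at h
    have hC : (((m + d).choose m : ℕ) : ℝ) * (Nat.factorial m : ℝ) * (Nat.factorial d : ℝ)
        = ((m + d).factorial : ℝ) := by exact_mod_cast h
    rw [gg, uu, neg_pow y d, pow_add (-1 : ℝ) m d, pow_add y m d, pow_add (2:ℝ) m d]
    have f1 : (Nat.factorial m : ℝ) ≠ 0 := Nat.cast_ne_zero.2 (Nat.factorial_ne_zero _)
    have f2 : (Nat.factorial d : ℝ) ≠ 0 := Nat.cast_ne_zero.2 (Nat.factorial_ne_zero _)
    have f3 : ((m + d).factorial : ℝ) ≠ 0 := Nat.cast_ne_zero.2 (Nat.factorial_ne_zero _)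
    have e : ((-1:ℝ)^m) * (-1)^m = 1 := by
      rw [← pow_add, show m + m = 2*m by ring, pow_mul]
      norm_num
    field_simp
    linear_combination (-(y^d * y^m * (bb m : ℝ))) * hC
      + (-(y^d * y^m * (bb m : ℝ) * (((m+d).choose m : ℕ) : ℝ) * (Nat.factorial d : ℝ)
          * (Nat.factorial m : ℝ))) * e
  rw [Finset.sum_congr rfl hterm, ← Finset.sum_mul]
  have hS : (∑ m ∈ Finset.range (n+1), uu n m) = (catalan n : ℝ) := SS_eq n
  rw [hS, oddDF]
  have hc := cat_fact n
  have f1 : (Nat.factorial n : ℝ) ≠ 0 := Nat.cast_ne_zero.2 (Nat.factorial_ne_zero _)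
  have f2 : (Nat.factorial (n+1) : ℝ) ≠ 0 := Nat.cast_ne_zero.2 (Nat.factorial_ne_zero _)
  field_simp
  linear_combination (y^n) * hc

end D0Aux

/-- Lemma: Σ_{k=0}^∞ (-1)^k ((2k-1)!!/(k!(k+1)!)) (α²/2)^k = e^{-α²/2}(I₀(α²/2)+I₁(α²/2)). -/
theorem d0_bessel (α : ℝ) :
    ∑' k : ℕ, (-1:ℝ)^k * (oddDF k / ((Nat.factorial k : ℝ) * (Nat.factorial (k+1) : ℝ)))
        * (α^2/2)^k
      = Real.exp (-α^2/2) * (besselI 0 (α^2/2) + besselI 1 (α^2/2)) := by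
  set y : ℝ := α^2/2 with hy
  have key : Real.exp (-y) * (besselI 0 y + besselI 1 y)
      = ∑' k : ℕ, (-1:ℝ)^k * (oddDF k / ((Nat.factorial k : ℝ) * (Nat.factorial (k+1) : ℝ))) * y ^ k := by
    rw [D0Aux.exp_eq, D0Aux.bessel_sum]
    rw [tsum_mul_tsum_eq_tsum_sum_antidiagonal_of_summable_norm
      (D0Aux.exp_norm_summable y) (D0Aux.gg_norm_summable y)]
    refine tsum_congr fun n => ?_
    rw [Finset.Nat.sum_antidiagonal_eq_sum_range_succ_mk]
    exact D0Aux.coeff_eq y n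
  have harg : (-α^2/2 : ℝ) = -y := by rw [hy]; ring
  rw [harg]
  exact key.symm
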